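/- arXiv:math/0603378 — 6 statements merged into one kernel-verified Lean document; each statement's English description precedes it below -/
import Mathlib

section
/- Suppose β > Σ_{v∈V} φ(v). Then every tree t* maximizing |d̄(t,𝐭) − d̄(t,𝐭')| over t ∈ 𝒯 belongs to the union of the set of configurations minimizing ℒ(y) + β𝒫(y) over y ∈ 𝒴 and the set of configurations minimizing −ℒ(y) + β𝒫(y) over y ∈ 𝒴. -/
open Finset

/-- Proposition 4.1: if `β > ∑_{v ∈ V} φ v`, every tree maximizing
`|d̄(t,𝐭) - d̄(t,𝐭')|` over the set of trees `𝒯` belongs to the union of the set of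
configurations minimizing `ℒ(y) + β𝒫(y)` and the set of configurations minimizing
`-ℒ(y) + β𝒫(y)` over `𝒴 = {0,1}^V`. -/
theorem stmt_0
    {A : Type*} [Fintype A] [DecidableEq A] [Nonempty A]
    (L : ℕ) (hL : 0 < L)
    (V : Finset (List A)) (hV : ∀ l : List A, l ∈ V ↔ l.length ≤ L)
    (φ : List A → ℝ) (hφ : ∀ v ∈ V, 0 < φ v)
    -- trees: suffix-closed subsets of V
    (IsTree : Finset (List A) → Prop)
    (hIsTree : ∀ t, IsTree t ↔ t ⊆ V ∧ ∀ (a : A) (w : List A), a :: w ∈ t → w ∈ t)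
    -- the distance on trees
    (d : Finset (List A) → Finset (List A) → ℝ)
    (hd : ∀ t t', d t t' = ∑ v ∈ V,
        φ v * ((if v ∈ t then (1 : ℝ) else 0) - (if v ∈ t' then (1 : ℝ) else 0)) ^ 2)
    -- the two samples of trees
    (n m : ℕ) (hn : 0 < n) (hm : 0 < m)
    (ts : Fin n → Finset (List A)) (ts' : Fin m → Finset (List A))
    (hts : ∀ i, IsTree (ts i)) (hts' : ∀ i, IsTree (ts' i))
    -- empirical mean distances to the samples
    (dbar dbar' : Finset (List A) → ℝ)
    (hdbar : ∀ t, dbar t = (∑ i, d t (ts i)) / n)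
    (hdbar' : ∀ t, dbar' t = (∑ i, d t (ts' i)) / m)
    -- empirical node means and Δ
    (tbar tbar' : List A → ℝ)
    (htbar : ∀ v, tbar v = (∑ i, if v ∈ ts i then (1 : ℝ) else 0) / n)
    (htbar' : ∀ v, tbar' v = (∑ i, if v ∈ ts' i then (1 : ℝ) else 0) / m)
    (Δ : List A → ℝ) (hΔ : ∀ v, Δ v = tbar' v - tbar v)
    -- ℒ and the penalty 𝒫 on configurations
    (Lf Pf : (List A → Bool) → ℝ)
    (hLf : ∀ y, Lf y = ∑ v ∈ V, φ v * Δ v * (if y v then (1 : ℝ) else 0))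
    (hPf : ∀ y, Pf y = ∑ v ∈ V, ∑ a : A,
        if (a :: v) ∈ V then
          (if y (a :: v) then (1 : ℝ) else 0) * (1 - if y v then (1 : ℝ) else 0)
        else 0)
    (β : ℝ) (hβ : β > ∑ v ∈ V, φ v)
    -- a tree maximizing |d̄(·,𝐭) - d̄(·,𝐭')| over 𝒯
    (tstar : Finset (List A)) (htstar : IsTree tstar)
    (hmax : ∀ t, IsTree t → |dbar t - dbar' t| ≤ |dbar tstar - dbar' tstar|) :
    (∀ y : List A → Bool, (∀ v, y v = true → v ∈ V) →
        Lf (fun v => decide (v ∈ tstar)) + β * Pf (fun v => decide (v ∈ tstar))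
          ≤ Lf y + β * Pf y) ∨
    (∀ y : List A → Bool, (∀ v, y v = true → v ∈ V) →
        -Lf (fun v => decide (v ∈ tstar)) + β * Pf (fun v => decide (v ∈ tstar))
          ≤ -Lf y + β * Pf y) := by
  classical
  have hn0 : (0:ℝ) < n := by exact_mod_cast hn
  have hm0 : (0:ℝ) < m := by exact_mod_cast hm
  have hsum_nonneg : (0:ℝ) ≤ ∑ v ∈ V, φ v :=
    Finset.sum_nonneg fun v hv => (hφ v hv).le
  have hind : ∀ (t : Finset (List A)) (v : List A),
      (if v ∈ t then (1:ℝ) else 0) = 0 ∨ (if v ∈ t then (1:ℝ) else 0) = 1 := by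
    intro t v; by_cases h : v ∈ t <;> simp [h]
  have hsq : ∀ x y : ℝ, (x = 0 ∨ x = 1) → (y = 0 ∨ y = 1) →
      (x - y)^2 = x + y - 2 * x * y := by
    rintro x y (rfl|rfl) (rfl|rfl) <;> ring
  -- mean distance formulas
  have hdbar_eq : ∀ t, dbar t = ∑ v ∈ V, φ v *
      ((if v ∈ t then (1:ℝ) else 0) + tbar v
        - 2 * (if v ∈ t then (1:ℝ) else 0) * tbar v) := by
    intro t
    rw [hdbar]
    have e1 : ∀ i : Fin n, d t (ts i) = ∑ v ∈ V, φ v *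
        ((if v ∈ t then (1:ℝ) else 0) + (if v ∈ ts i then (1:ℝ) else 0)
          - 2 * (if v ∈ t then (1:ℝ) else 0) * (if v ∈ ts i then (1:ℝ) else 0)) := by
      intro i; rw [hd]
      exact Finset.sum_congr rfl fun v hv => by rw [hsq _ _ (hind t v) (hind (ts i) v)]
    simp only [e1]
    rw [Finset.sum_comm, Finset.sum_div]
    refine Finset.sum_congr rfl fun v hv => ?_
    rw [htbar]
    have e2 : (∑ i : Fin n, φ v * ((if v ∈ t then (1:ℝ) else 0) + (if v ∈ ts i then (1:ℝ) else 0)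
          - 2 * (if v ∈ t then (1:ℝ) else 0) * (if v ∈ ts i then (1:ℝ) else 0)))
        = φ v * ((n:ℝ) * (if v ∈ t then (1:ℝ) else 0)
            + (∑ i : Fin n, (if v ∈ ts i then (1:ℝ) else 0))
            - 2 * (if v ∈ t then (1:ℝ) else 0) * (∑ i : Fin n, (if v ∈ ts i then (1:ℝ) else 0))) := by
      rw [← Finset.mul_sum]
      congr 1
      rw [Finset.sum_sub_distrib, Finset.sum_add_distrib, Finset.sum_const, ← Finset.mul_sum]
      simp [nsmul_eq_mul]
    rw [e2]
    field_simp
    try ring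
  have hdbar'_eq : ∀ t, dbar' t = ∑ v ∈ V, φ v *
      ((if v ∈ t then (1:ℝ) else 0) + tbar' v
        - 2 * (if v ∈ t then (1:ℝ) else 0) * tbar' v) := by
    intro t
    rw [hdbar']
    have e1 : ∀ i : Fin m, d t (ts' i) = ∑ v ∈ V, φ v *
        ((if v ∈ t then (1:ℝ) else 0) + (if v ∈ ts' i then (1:ℝ) else 0)
          - 2 * (if v ∈ t then (1:ℝ) else 0) * (if v ∈ ts' i then (1:ℝ) else 0)) := by
      intro i; rw [hd]
      exact Finset.sum_congr rfl fun v hv => by rw [hsq _ _ (hind t v) (hind (ts' i) v)]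
    simp only [e1]
    rw [Finset.sum_comm, Finset.sum_div]
    refine Finset.sum_congr rfl fun v hv => ?_
    rw [htbar']
    have e2 : (∑ i : Fin m, φ v * ((if v ∈ t then (1:ℝ) else 0) + (if v ∈ ts' i then (1:ℝ) else 0)
          - 2 * (if v ∈ t then (1:ℝ) else 0) * (if v ∈ ts' i then (1:ℝ) else 0)))
        = φ v * ((m:ℝ) * (if v ∈ t then (1:ℝ) else 0)
            + (∑ i : Fin m, (if v ∈ ts' i then (1:ℝ) else 0))
            - 2 * (if v ∈ t then (1:ℝ) else 0) * (∑ i : Fin m, (if v ∈ ts' i then (1:ℝ) else 0))) := by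
      rw [← Finset.mul_sum]
      congr 1
      rw [Finset.sum_sub_distrib, Finset.sum_add_distrib, Finset.sum_const, ← Finset.mul_sum]
      simp [nsmul_eq_mul]
    rw [e2]
    field_simp
    try ring
  -- the key identity
  have hkey : ∀ t : Finset (List A), dbar t - dbar' t
      = 2 * Lf (fun v => decide (v ∈ t)) - ∑ v ∈ V, φ v * Δ v := by
    intro t
    rw [hdbar_eq, hdbar'_eq, hLf, Finset.mul_sum, ← Finset.sum_sub_distrib,
      ← Finset.sum_sub_distrib]
    refine Finset.sum_congr rfl fun v hv => ?_
    rw [hΔ]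
    simp only [decide_eq_true_eq]
    split_ifs with h <;> ring
  -- penalty facts
  have hterm_nonneg : ∀ (y : List A → Bool) (v : List A) (a : A),
      0 ≤ (if (a :: v) ∈ V then
        (if y (a :: v) then (1:ℝ) else 0) * (1 - if y v then (1:ℝ) else 0) else 0) := by
    intro y v a; split_ifs <;> norm_num
  have hterm01 : ∀ (y : List A → Bool) (v : List A) (a : A),
      (if (a :: v) ∈ V then
        (if y (a :: v) then (1:ℝ) else 0) * (1 - if y v then (1:ℝ) else 0) else 0) = 0 ∨
      (if (a :: v) ∈ V then
        (if y (a :: v) then (1:ℝ) else 0) * (1 - if y v then (1:ℝ) else 0) else 0) = 1 := by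
    intro y v a; split_ifs <;> norm_num
  have hP1 : ∀ y : List A → Bool, Pf y ≠ 0 → 1 ≤ Pf y := by
    intro y hne
    rw [hPf] at hne ⊢
    have h1 : ∃ v ∈ V, (∑ a : A,
        if (a :: v) ∈ V then
          (if y (a :: v) then (1:ℝ) else 0) * (1 - if y v then (1:ℝ) else 0) else 0) ≠ 0 := by
      by_contra h; push_neg at h; exact hne (Finset.sum_eq_zero h)
    obtain ⟨v, hv, hvne⟩ := h1
    have h2 : ∃ a ∈ (Finset.univ : Finset A),
        (if (a :: v) ∈ V then
          (if y (a :: v) then (1:ℝ) else 0) * (1 - if y v then (1:ℝ) else 0) else 0) ≠ 0 := by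
      by_contra h; push_neg at h; exact hvne (Finset.sum_eq_zero h)
    obtain ⟨a, _, hane⟩ := h2
    have h3 := (hterm01 y v a).resolve_left hane
    calc (1:ℝ) = _ := h3.symm
      _ ≤ ∑ a : A, (if (a :: v) ∈ V then
            (if y (a :: v) then (1:ℝ) else 0) * (1 - if y v then (1:ℝ) else 0) else 0) :=
        Finset.single_le_sum (fun a _ => hterm_nonneg y v a) (Finset.mem_univ a)
      _ ≤ _ :=
        Finset.single_le_sum
          (fun v _ => Finset.sum_nonneg fun a _ => hterm_nonneg y v a) hv
  -- the penalty vanishes on trees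
  have hPtree : ∀ t, IsTree t → Pf (fun v => decide (v ∈ t)) = 0 := by
    intro t ht
    obtain ⟨hsub, hcl⟩ := (hIsTree t).mp ht
    rw [hPf]
    refine Finset.sum_eq_zero fun v hv => Finset.sum_eq_zero fun a _ => ?_
    by_cases h1 : (a :: v) ∈ V
    · by_cases h2 : (a :: v) ∈ t
      · have h3 := hcl a v h2
        simp [h1, h2, h3]
      · simp [h1, h2]
    · simp [h1]
  -- zero penalty configurations supported in V are trees
  have htree_of_P0 : ∀ y : List A → Bool, (∀ v, y v = true → v ∈ V) → Pf y = 0 →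
      ∃ t, IsTree t ∧ Lf y = Lf (fun v => decide (v ∈ t)) := by
    intro y hy hP0
    have hz : ∀ v ∈ V, ∀ a : A,
        (if (a :: v) ∈ V then
          (if y (a :: v) then (1:ℝ) else 0) * (1 - if y v then (1:ℝ) else 0) else 0) = 0 := by
      rw [hPf] at hP0
      have h1 := (Finset.sum_eq_zero_iff_of_nonneg
        (fun v _ => Finset.sum_nonneg fun a _ => hterm_nonneg y v a)).mp hP0
      intro v hv a
      exact (Finset.sum_eq_zero_iff_of_nonneg
        (fun a _ => hterm_nonneg y v a)).mp (h1 v hv) a (Finset.mem_univ a)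
    refine ⟨V.filter (fun v => y v = true), ?_, ?_⟩
    · rw [hIsTree]
      refine ⟨Finset.filter_subset _ _, ?_⟩
      intro a w hw
      rw [Finset.mem_filter] at hw ⊢
      obtain ⟨hwV, hwy⟩ := hw
      have hwV' : w ∈ V := by
        rw [hV] at hwV ⊢
        have hlen : (a :: w).length = w.length + 1 := rfl
        omega
      refine ⟨hwV', ?_⟩
      have hzz := hz w hwV' a
      by_contra hyw
      simp only [Bool.not_eq_true] at hyw
      simp [hwV, hwy, hyw] at hzz
    · rw [hLf, hLf]
      refine Finset.sum_congr rfl fun v hv => ?_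
      by_cases h : y v = true
      · simp [h, Finset.mem_filter, hv]
      · simp [Finset.mem_filter, h]
  -- bound on differences of Lf
  have htbar01 : ∀ v : List A, 0 ≤ tbar v ∧ tbar v ≤ 1 := by
    intro v; rw [htbar]
    constructor
    · apply div_nonneg _ hn0.le
      exact Finset.sum_nonneg fun i _ => by split <;> norm_num
    · rw [div_le_one hn0]
      calc (∑ i : Fin n, if v ∈ ts i then (1:ℝ) else 0) ≤ ∑ _i : Fin n, (1:ℝ) :=
          Finset.sum_le_sum fun i _ => by split <;> norm_num
        _ = n := by simp
  have htbar'01 : ∀ v : List A, 0 ≤ tbar' v ∧ tbar' v ≤ 1 := by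
    intro v; rw [htbar']
    constructor
    · apply div_nonneg _ hm0.le
      exact Finset.sum_nonneg fun i _ => by split <;> norm_num
    · rw [div_le_one hm0]
      calc (∑ i : Fin m, if v ∈ ts' i then (1:ℝ) else 0) ≤ ∑ _i : Fin m, (1:ℝ) :=
          Finset.sum_le_sum fun i _ => by split <;> norm_num
        _ = m := by simp
  have hΔbd : ∀ v : List A, -1 ≤ Δ v ∧ Δ v ≤ 1 := by
    intro v; rw [hΔ]
    have h1 := htbar01 v
    have h2 := htbar'01 v
    constructor <;> linarith [h1.1, h1.2, h2.1, h2.2]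
  have hLdiff : ∀ y y' : List A → Bool, Lf y - Lf y' ≤ ∑ v ∈ V, φ v := by
    intro y y'
    rw [hLf, hLf, ← Finset.sum_sub_distrib]
    refine Finset.sum_le_sum fun v hv => ?_
    have h1 := hΔbd v
    have h2 := hφ v hv
    split_ifs <;> nlinarith [h1.1, h1.2]
  -- main case split
  rcases le_or_gt (dbar tstar - dbar' tstar) 0 with hc | hc
  · left
    intro y hy
    rw [hPtree tstar htstar, mul_zero, add_zero]
    by_cases hP0 : Pf y = 0
    · obtain ⟨t, ht, hLy⟩ := htree_of_P0 y hy hP0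
      rw [hLy, hP0, mul_zero, add_zero]
      have h1 := hmax t ht
      have h2 : dbar tstar - dbar' tstar ≤ dbar t - dbar' t := by
        have h3 := neg_abs_le (dbar t - dbar' t)
        rw [abs_of_nonpos hc] at h1
        linarith
      rw [hkey tstar, hkey t] at h2
      linarith
    · have h1 := hP1 y hP0
      have h2 := hLdiff (fun v => decide (v ∈ tstar)) y
      have h3 : β ≤ β * Pf y := le_mul_of_one_le_right (by linarith) h1
      linarith
  · right
    intro y hy
    rw [hPtree tstar htstar, mul_zero, add_zero]
    by_cases hP0 : Pf y = 0
    · obtain ⟨t, ht, hLy⟩ := htree_of_P0 y hy hP0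
      rw [hLy, hP0, mul_zero, add_zero]
      have h1 := hmax t ht
      have h2 : dbar t - dbar' t ≤ dbar tstar - dbar' tstar := by
        have h3 := le_abs_self (dbar t - dbar' t)
        rw [abs_of_pos hc] at h1
        linarith
      rw [hkey tstar, hkey t] at h2
      linarith
    · have h1 := hP1 y hP0
      have h2 := hLdiff y (fun v => decide (v ∈ tstar))
      have h3 : β ≤ β * Pf y := le_mul_of_one_le_right (by linarith) h1
      linarith
end

section
/- Let π and π' be probability distributions on 𝒯. Then πd(t) = π'd(t) for all t ∈ 𝒯 if and only if μ_π(v) = μ_{π'}(v) for all v ∈ V. -/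
open Finset

/-- Lemma A.1: for probability distributions `π, π'` on the set `𝒯` of trees,
`πd(t) = π'd(t)` for all `t ∈ 𝒯` if and only if `μ_π(v) = μ_{π'}(v)` for all `v ∈ V`. -/
theorem stmt_2
    {A : Type*} [Fintype A] [DecidableEq A] [Nonempty A]
    (L : ℕ) (hL : 0 < L)
    (V : Finset (List A)) (hV : ∀ l : List A, l ∈ V ↔ l.length ≤ L)
    (φ : List A → ℝ) (hφ : ∀ v ∈ V, 0 < φ v)
    -- 𝒯: the (finite) collection of trees, i.e. suffix-closed subsets of V
    (TT : Finset (Finset (List A)))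
    (hTT : ∀ t, t ∈ TT ↔ t ⊆ V ∧ ∀ (a : A) (w : List A), a :: w ∈ t → w ∈ t)
    -- the distance on trees
    (d : Finset (List A) → Finset (List A) → ℝ)
    (hd : ∀ t t', d t t' = ∑ v ∈ V,
        φ v * ((if v ∈ t then (1 : ℝ) else 0) - (if v ∈ t' then (1 : ℝ) else 0)) ^ 2)
    -- probability distributions π and π' on 𝒯
    (π π' : Finset (List A) → ℝ)
    (hπ0 : ∀ t, 0 ≤ π t) (hπ1 : ∑ t ∈ TT, π t = 1)
    (hπ'0 : ∀ t, 0 ≤ π' t) (hπ'1 : ∑ t ∈ TT, π' t = 1)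
    -- node marginals
    (μπ μπ' : List A → ℝ)
    (hμπ : ∀ v, μπ v = ∑ t ∈ TT, π t * (if v ∈ t then (1 : ℝ) else 0))
    (hμπ' : ∀ v, μπ' v = ∑ t ∈ TT, π' t * (if v ∈ t then (1 : ℝ) else 0))
    -- mean distance functions
    (πd π'd : Finset (List A) → ℝ)
    (hπd : ∀ t, πd t = ∑ t' ∈ TT, π t' * d t' t)
    (hπ'd : ∀ t, π'd t = ∑ t' ∈ TT, π' t' * d t' t) :
    (∀ t ∈ TT, πd t = π'd t) ↔ (∀ v ∈ V, μπ v = μπ' v) := by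
  classical
  -- Key representation of the mean distance in terms of the marginals.
  have key : ∀ (p : Finset (List A) → ℝ) (μ : List A → ℝ),
      (∑ t ∈ TT, p t = 1) →
      (∀ v, μ v = ∑ t ∈ TT, p t * (if v ∈ t then (1:ℝ) else 0)) →
      ∀ t, (∑ t' ∈ TT, p t' * d t' t)
        = ∑ v ∈ V, φ v * (μ v + (if v ∈ t then (1:ℝ) else 0)
            - 2 * μ v * (if v ∈ t then (1:ℝ) else 0)) := by
    intro p μ hp1 hμ t
    have step : ∀ t' ∈ TT, p t' * d t' t
        = ∑ v ∈ V, (φ v * (p t' * (if v ∈ t' then (1:ℝ) else 0)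
            + p t' * (if v ∈ t then (1:ℝ) else 0))
          - φ v * (2 * (p t' * (if v ∈ t' then (1:ℝ) else 0))
              * (if v ∈ t then (1:ℝ) else 0))) := by
      intro t' _
      rw [hd, Finset.mul_sum]
      refine Finset.sum_congr rfl fun v _ => ?_
      by_cases h1 : v ∈ t' <;> by_cases h2 : v ∈ t <;> simp [h1, h2] <;> ring
    rw [Finset.sum_congr rfl step, Finset.sum_comm]
    refine Finset.sum_congr rfl fun v hv => ?_
    rw [Finset.sum_sub_distrib]
    have h1 : ∑ t' ∈ TT, φ v * (p t' * (if v ∈ t' then (1:ℝ) else 0)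
        + p t' * (if v ∈ t then (1:ℝ) else 0))
        = φ v * (μ v + (if v ∈ t then (1:ℝ) else 0)) := by
      rw [← Finset.mul_sum, Finset.sum_add_distrib, ← hμ, ← Finset.sum_mul, hp1, one_mul]
    have h2 : ∑ t' ∈ TT, φ v * (2 * (p t' * (if v ∈ t' then (1:ℝ) else 0))
        * (if v ∈ t then (1:ℝ) else 0))
        = φ v * (2 * μ v * (if v ∈ t then (1:ℝ) else 0)) := by
      have e : ∀ t' ∈ TT, φ v * (2 * (p t' * (if v ∈ t' then (1:ℝ) else 0))
          * (if v ∈ t then (1:ℝ) else 0))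
          = (2 * φ v * (if v ∈ t then (1:ℝ) else 0)) * (p t' * (if v ∈ t' then (1:ℝ) else 0)) :=
        fun t' _ => by ring
      rw [Finset.sum_congr rfl e, ← Finset.mul_sum, ← hμ]
      ring
    rw [h1, h2]
    ring
  constructor
  · intro h v hv
    -- build the two trees: all suffixes of v, and proper suffixes of v
    set t₁ : Finset (List A) := v.tails.toFinset with ht₁
    set t₀ : Finset (List A) := t₁.erase v with ht₀
    have hmem₁ : ∀ l : List A, l ∈ t₁ ↔ l <:+ v := by
      intro l; simp [ht₁, List.mem_tails]
    have hvt₁ : v ∈ t₁ := (hmem₁ v).2 (List.suffix_refl v)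
    have hsub₁ : t₁ ⊆ V := by
      intro l hl
      rw [hV]
      exact le_trans ((hmem₁ l).1 hl).length_le ((hV v).1 hv)
    have ht₁TT : t₁ ∈ TT := by
      rw [hTT]
      refine ⟨hsub₁, fun a w hw => ?_⟩
      rw [hmem₁] at hw ⊢
      exact (List.suffix_cons a w).trans hw
    have ht₀TT : t₀ ∈ TT := by
      rw [hTT]
      refine ⟨fun l hl => hsub₁ (Finset.mem_of_mem_erase hl), fun a w hw => ?_⟩
      have hw1 : a :: w ∈ t₁ := Finset.mem_of_mem_erase hw
      have hwv : a :: w <:+ v := (hmem₁ _).1 hw1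
      refine Finset.mem_erase.2 ⟨?_, (hmem₁ w).2 ((List.suffix_cons a w).trans hwv)⟩
      intro hwveq
      have : (a :: w).length ≤ v.length := hwv.length_le
      simp [hwveq] at this
    -- memberships agree off v
    have hagree : ∀ v' ∈ V, v' ≠ v → ((v' ∈ t₁) ↔ (v' ∈ t₀)) := by
      intro v' _ hne
      simp [ht₀, Finset.mem_erase, hne]
    have hvnot₀ : v ∉ t₀ := by simp [ht₀]
    -- difference formula
    have diff : ∀ μ : List A → ℝ,
        (∑ v' ∈ V, φ v' * (μ v' + (if v' ∈ t₁ then (1:ℝ) else 0)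
            - 2 * μ v' * (if v' ∈ t₁ then (1:ℝ) else 0)))
        - (∑ v' ∈ V, φ v' * (μ v' + (if v' ∈ t₀ then (1:ℝ) else 0)
            - 2 * μ v' * (if v' ∈ t₀ then (1:ℝ) else 0)))
        = φ v * (1 - 2 * μ v) := by
      intro μ
      rw [← Finset.sum_sub_distrib]
      rw [Finset.sum_eq_single v]
      · simp only [if_pos hvt₁, if_neg hvnot₀]; ring
      · intro v' hv' hne
        by_cases h1 : v' ∈ t₁
        · have h0 : v' ∈ t₀ := (hagree v' hv' hne).1 h1
          simp [h1, h0]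
        · have h0 : v' ∉ t₀ := fun hc => h1 ((hagree v' hv' hne).2 hc)
          simp [h1, h0]
      · intro hvnot; exact absurd hv hvnot
    have e1 := h t₁ ht₁TT
    have e0 := h t₀ ht₀TT
    rw [hπd, hπ'd, key π μπ hπ1 hμπ, key π' μπ' hπ'1 hμπ'] at e1 e0
    have : φ v * (1 - 2 * μπ v) = φ v * (1 - 2 * μπ' v) := by
      rw [← diff μπ, ← diff μπ', e1, e0]
    have hφv := hφ v hv
    nlinarith [this, hφv]
  · intro h t _
    rw [hπd, hπ'd, key π μπ hπ1 hμπ, key π' μπ' hπ'1 hμπ']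
    exact Finset.sum_congr rfl fun v hv => by rw [h v hv]
end

section
/- Let π and π' be probability distributions on 𝒯 both satisfying the Markov hypotheses with the same tree-shift f. If μ_π(v) = μ_{π'}(v) for all v ∈ V, then π(t) = π'(t) for all t ∈ 𝒯. In other words, under the Markov hypotheses the node marginals (μ_π(v), v ∈ V) determine the probabilities (π(t), t ∈ 𝒯). -/
open Finset
open scoped Classical

/-- The probability, under the law `π` on the finite collection `TT` of trees,
of the event `E`. -/
noncomputable def prOf {A : Type*} [DecidableEq A]
    (TT : Finset (Finset (List A))) (π : Finset (List A) → ℝ)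
    (E : Finset (List A) → Prop) : ℝ :=
  ∑ t ∈ TT, if E t then π t else 0

/-- The mean occupation `μ_π(v) = P(T(v) = 1)` of node `v`. -/
noncomputable def muOf {A : Type*} [DecidableEq A]
    (TT : Finset (Finset (List A))) (π : Finset (List A) → ℝ) (v : List A) : ℝ :=
  prOf TT π (fun t => v ∈ t)

/-- `f` is a tree-shift on `V`: for each nonempty node `w ∈ V`, `f w` is the father or
a brother of `w`, and some iterate of `f` sends `w` to the root `λ = []`. -/
def IsTreeShift {A : Type*} (V : Finset (List A)) (f : List A → List A) : Prop :=
  (∀ (a : A) (u : List A), (a :: u) ∈ V →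
      f (a :: u) = u ∨ ∃ b : A, b ≠ a ∧ f (a :: u) = b :: u) ∧
  (∀ v ∈ V, v ≠ [] → ∃ k : ℕ, f^[k] v = [])

/-- The Markov hypotheses for a random tree with law `π` (supported on the finite
collection `TT` of trees with node set `V`) with respect to the tree-shift `f`:
(a) `0 < μ_π(w) < μ_π(f w) < 1`; (b) `P(T(w) = 1, T(f w) = 0) = 0`;
(c) the Markov conditional-probability property. -/
def MarkovHyp {A : Type*} [DecidableEq A] (V : Finset (List A))
    (TT : Finset (Finset (List A))) (π : Finset (List A) → ℝ)
    (f : List A → List A) : Prop :=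
  (∀ w ∈ V, w ≠ [] →
      0 < muOf TT π w ∧ muOf TT π w < muOf TT π (f w) ∧ muOf TT π (f w) < 1) ∧
  (∀ w ∈ V, w ≠ [] → prOf TT π (fun t => w ∈ t ∧ f w ∉ t) = 0) ∧
  (∀ w ∈ V, w ≠ [] → ∀ I J : Finset (List A), I ⊆ V → J ⊆ V →
      f w ∈ I → w ∉ I ∪ J →
      0 < prOf TT π (fun t => I ⊆ t ∧ ∀ u ∈ J, u ∉ t) →
      prOf TT π (fun t => w ∈ t ∧ I ⊆ t ∧ ∀ u ∈ J, u ∉ t) /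
          prOf TT π (fun t => I ⊆ t ∧ ∀ u ∈ J, u ∉ t) =
        prOf TT π (fun t => w ∈ t ∧ f w ∈ t) / prOf TT π (fun t => f w ∈ t))

section Helpers
variable {A : Type*} [DecidableEq A] {TT : Finset (Finset (List A))} {π : Finset (List A) → ℝ}

lemma prOf_congr {E F : Finset (List A) → Prop} (h : ∀ t ∈ TT, E t ↔ F t) :
    prOf TT π E = prOf TT π F := by
  unfold prOf
  refine Finset.sum_congr rfl fun t ht => ?_
  by_cases hE : E t
  · rw [if_pos hE, if_pos ((h t ht).1 hE)]
  · rw [if_neg hE, if_neg (fun hF => hE ((h t ht).2 hF))]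

lemma prOf_nonneg (h0 : ∀ t, 0 ≤ π t) (E : Finset (List A) → Prop) :
    0 ≤ prOf TT π E := by
  unfold prOf
  refine Finset.sum_nonneg fun t _ => ?_
  split
  · exact h0 t
  · exact le_refl 0

lemma prOf_mono (h0 : ∀ t, 0 ≤ π t) {E F : Finset (List A) → Prop}
    (h : ∀ t ∈ TT, E t → F t) : prOf TT π E ≤ prOf TT π F := by
  unfold prOf
  refine Finset.sum_le_sum fun t ht => ?_
  by_cases hE : E t
  · rw [if_pos hE, if_pos (h t ht hE)]
  · rw [if_neg hE]; split
    · exact h0 t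
    · exact le_refl 0

lemma prOf_split (E : Finset (List A) → Prop) (w : List A) :
    prOf TT π E =
      prOf TT π (fun t => E t ∧ w ∈ t) + prOf TT π (fun t => E t ∧ w ∉ t) := by
  unfold prOf
  rw [← Finset.sum_add_distrib]
  refine Finset.sum_congr rfl fun t _ => ?_
  by_cases hE : E t <;> by_cases hw : w ∈ t <;> simp [hE, hw]

lemma prOf_true (h1 : ∑ t ∈ TT, π t = 1) :
    prOf TT π (fun _ => True) = 1 := by
  unfold prOf; simpa using h1

lemma prOf_compl (h1 : ∑ t ∈ TT, π t = 1) (x : List A) :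
    prOf TT π (fun t => x ∉ t) = 1 - muOf TT π x := by
  have h := prOf_split (TT := TT) (π := π) (fun _ => True) x
  rw [prOf_true h1] at h
  have e1 : prOf TT π (fun t => True ∧ x ∈ t) = muOf TT π x :=
    prOf_congr fun t _ => by simp
  have e2 : prOf TT π (fun t => True ∧ x ∉ t) = prOf TT π (fun t => x ∉ t) :=
    prOf_congr fun t _ => by simp
  rw [e1, e2] at h
  linarith

end Helpers

lemma exists_leaf {A : Type*} [DecidableEq A] (f : List A → List A) (S : Finset (List A))
    (hex : ∀ v ∈ S, ∃ k, f^[k] v = ([] : List A))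
    (hne : ∃ w ∈ S, w ≠ []) :
    ∃ w ∈ S, w ≠ [] ∧ ∀ u ∈ S, u ≠ [] → f u ≠ w := by
  classical
  set d : List A → ℕ := fun v => if h : ∃ k, f^[k] v = ([] : List A) then Nat.find h else 0
    with hd
  obtain ⟨w0, hw0S, hw0ne⟩ := hne
  obtain ⟨w, hwmem, hwmax⟩ := Finset.exists_max_image (S.filter (· ≠ [])) d
    ⟨w0, Finset.mem_filter.2 ⟨hw0S, hw0ne⟩⟩
  rw [Finset.mem_filter] at hwmem
  refine ⟨w, hwmem.1, hwmem.2, ?_⟩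
  intro u huS hune hfu
  have hexu := hex u huS
  have hexw := hex w hwmem.1
  have hdu : d u = Nat.find hexu := dif_pos hexu
  have hdw : d w = Nat.find hexw := dif_pos hexw
  have hpos : 0 < Nat.find hexu := by
    rcases Nat.eq_zero_or_pos (Nat.find hexu) with h | h
    · have := Nat.find_spec hexu
      rw [h] at this
      exact absurd this hune
    · exact h
  have h2 : f^[Nat.find hexu - 1] w = [] := by
    have hsp : f^[Nat.find hexu] u = [] := Nat.find_spec hexu
    rw [← Nat.succ_pred_eq_of_pos hpos, Function.iterate_succ_apply, hfu] at hsp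
    exact hsp
  have hle : Nat.find hexw ≤ Nat.find hexu - 1 := Nat.find_le h2
  have hmax' := hwmax u (Finset.mem_filter.2 ⟨huS, hune⟩)
  rw [hdu, hdw] at hmax'
  omega


/-- Proposition A.2: if `π` and `π'` both satisfy the Markov hypotheses with
the same tree-shift `f` and have the same node marginals, then `π = π'` on `𝒯`: under the
Markov hypotheses, the node marginals determine the probabilities. -/
theorem stmt_3
    {A : Type*} [Fintype A] [DecidableEq A] [Nonempty A]
    (L : ℕ) (hL : 0 < L)
    (V : Finset (List A)) (hV : ∀ l : List A, l ∈ V ↔ l.length ≤ L)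
    (TT : Finset (Finset (List A)))
    (hTT : ∀ t, t ∈ TT ↔ t ⊆ V ∧ ∀ (a : A) (w : List A), a :: w ∈ t → w ∈ t)
    (π π' : Finset (List A) → ℝ)
    (hπ0 : ∀ t, 0 ≤ π t) (hπ1 : ∑ t ∈ TT, π t = 1)
    (hπ'0 : ∀ t, 0 ≤ π' t) (hπ'1 : ∑ t ∈ TT, π' t = 1)
    (f : List A → List A) (hf : IsTreeShift V f)
    (hM : MarkovHyp V TT π f) (hM' : MarkovHyp V TT π' f)
    (hμ : ∀ v ∈ V, muOf TT π v = muOf TT π' v) :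
    ∀ t ∈ TT, π t = π' t := by
  have hnilV : ([] : List A) ∈ V := (hV []).2 (by simp)
  have hVclosed : ∀ w ∈ V, w ≠ [] → f w ∈ V := by
    intro w hw hne
    obtain ⟨a, u, rfl⟩ : ∃ a u, w = a :: u := by
      cases w with
      | nil => exact absurd rfl hne
      | cons a u => exact ⟨a, u, rfl⟩
    have hlen : (a :: u).length ≤ L := (hV _).1 hw
    simp only [List.length_cons] at hlen
    rcases hf.1 a u hw with h | ⟨b, _, h⟩
    · rw [h]; exact (hV u).2 (by omega)
    · rw [h]; exact (hV _).2 (by simp; omega)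
  have key : ∀ S : Finset (List A), S ⊆ V → (∀ w ∈ S, w ≠ [] → f w ∈ S) →
      ∀ I J : Finset (List A), I ∪ J = S → Disjoint I J →
      prOf TT π (fun t => I ⊆ t ∧ ∀ u ∈ J, u ∉ t) =
        prOf TT π' (fun t => I ⊆ t ∧ ∀ u ∈ J, u ∉ t) := by
    intro S
    induction S using Finset.strongInduction with
    | _ S IH =>
    intro hSV hScl I J hIJ hdisj
    have hIsub : I ⊆ V := fun u hu => hSV (hIJ ▸ Finset.mem_union_left _ hu)
    have hJsub : J ⊆ V := fun u hu => hSV (hIJ ▸ Finset.mem_union_right _ hu)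
    by_cases hall : ∀ w ∈ S, w = []
    · -- all elements of S are the root
      have hI' : ∀ u ∈ I, u = [] := fun u hu => hall u (hIJ ▸ Finset.mem_union_left _ hu)
      have hJ' : ∀ u ∈ J, u = [] := fun u hu => hall u (hIJ ▸ Finset.mem_union_right _ hu)
      by_cases hIin : ([] : List A) ∈ I
      · have hJno : ([] : List A) ∉ J := Finset.disjoint_left.1 hdisj hIin
        have hiff : ∀ t ∈ TT, ((I ⊆ t ∧ ∀ u ∈ J, u ∉ t) ↔ ([] : List A) ∈ t) := by
          intro t _
          constructor
          · exact fun h => h.1 hIin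
          · intro h
            refine ⟨fun u hu => (hI' u hu) ▸ h, fun u hu => absurd ((hJ' u hu) ▸ hu) hJno⟩
        rw [prOf_congr hiff, prOf_congr hiff]
        exact hμ [] hnilV
      · by_cases hJin : ([] : List A) ∈ J
        · have hiff : ∀ t ∈ TT, ((I ⊆ t ∧ ∀ u ∈ J, u ∉ t) ↔ ([] : List A) ∉ t) := by
            intro t _
            constructor
            · exact fun h => h.2 [] hJin
            · intro h
              exact ⟨fun u hu => absurd ((hI' u hu) ▸ hu) hIin,
                fun u hu => (hJ' u hu) ▸ h⟩
          rw [prOf_congr hiff, prOf_congr hiff, prOf_compl hπ1, prOf_compl hπ'1,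
            hμ [] hnilV]
        · have hiff : ∀ t ∈ TT, ((I ⊆ t ∧ ∀ u ∈ J, u ∉ t) ↔ True) := by
            intro t _
            constructor
            · exact fun _ => trivial
            · intro _
              exact ⟨fun u hu => absurd ((hI' u hu) ▸ hu) hIin,
                fun u hu => absurd ((hJ' u hu) ▸ hu) hJin⟩
          rw [prOf_congr hiff, prOf_congr hiff, prOf_true hπ1, prOf_true hπ'1]
    · push_neg at hall
      obtain ⟨w, hwS, hwne, hwleaf⟩ := exists_leaf f S
        (by
          intro v hv
          by_cases h : v = []
          · exact ⟨0, by simp [h]⟩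
          · exact hf.2 v (hSV hv) h)
        hall
      have hwV : w ∈ V := hSV hwS
      have hvne : f w ≠ w := hwleaf w hwS hwne
      have hvS : f w ∈ S := hScl w hwS hwne
      have hvV : f w ∈ V := hSV hvS
      have hS'ss : S.erase w ⊂ S := Finset.erase_ssubset hwS
      have hS'V : S.erase w ⊆ V := (Finset.erase_subset _ _).trans hSV
      have hS'cl : ∀ u ∈ S.erase w, u ≠ [] → f u ∈ S.erase w := by
        intro u hu hune
        rw [Finset.mem_erase] at hu ⊢
        exact ⟨hwleaf u hu.2 hune, hScl u hu.2 hune⟩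
      have hvS' : f w ∈ S.erase w := Finset.mem_erase.2 ⟨hvne, hvS⟩
      -- the conditional-probability consequence of the Markov hypotheses
      have main : ∀ ρ : Finset (List A) → ℝ, (∀ t, 0 ≤ ρ t) → MarkovHyp V TT ρ f →
          ∀ I' J' : Finset (List A), I' ⊆ V → J' ⊆ V → f w ∈ I' → w ∉ I' ∪ J' →
          prOf TT ρ (fun t => w ∈ t ∧ I' ⊆ t ∧ ∀ u ∈ J', u ∉ t) =
            (muOf TT ρ w / muOf TT ρ (f w)) *
              prOf TT ρ (fun t => I' ⊆ t ∧ ∀ u ∈ J', u ∉ t) := by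
        intro ρ hρ0 hMρ I' J' hI'V hJ'V hvI' hwIJ
        have hwfmu : prOf TT ρ (fun t => w ∈ t ∧ f w ∈ t) = muOf TT ρ w := by
          have hsplit := prOf_split (TT := TT) (π := ρ) (fun t => w ∈ t) (f w)
          have hb := hMρ.2.1 w hwV hwne
          rw [muOf, hsplit, hb, add_zero]
        rcases lt_or_eq_of_le (prOf_nonneg hρ0 (fun t => I' ⊆ t ∧ ∀ u ∈ J', u ∉ t))
          with hP | hP
        · have hc := hMρ.2.2 w hwV hwne I' J' hI'V hJ'V hvI' hwIJ hP
          rw [hwfmu] at hc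
          have hden : prOf TT ρ (fun t => f w ∈ t) = muOf TT ρ (f w) := rfl
          rw [hden] at hc
          calc prOf TT ρ (fun t => w ∈ t ∧ I' ⊆ t ∧ ∀ u ∈ J', u ∉ t)
              = prOf TT ρ (fun t => w ∈ t ∧ I' ⊆ t ∧ ∀ u ∈ J', u ∉ t) /
                  prOf TT ρ (fun t => I' ⊆ t ∧ ∀ u ∈ J', u ∉ t) *
                  prOf TT ρ (fun t => I' ⊆ t ∧ ∀ u ∈ J', u ∉ t) :=
              (div_mul_cancel₀ _ hP.ne').symm
            _ = _ := by rw [hc]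
        · have h1 : prOf TT ρ (fun t => w ∈ t ∧ I' ⊆ t ∧ ∀ u ∈ J', u ∉ t) ≤
              prOf TT ρ (fun t => I' ⊆ t ∧ ∀ u ∈ J', u ∉ t) :=
            prOf_mono hρ0 fun t _ h => h.2
          have h2 := prOf_nonneg (TT := TT) hρ0 (fun t => w ∈ t ∧ I' ⊆ t ∧ ∀ u ∈ J', u ∉ t)
          rw [← hP] at h1 ⊢
          rw [mul_zero]
          linarith
      have zero_case : ∀ ρ : Finset (List A) → ℝ, (∀ t, 0 ≤ ρ t) → MarkovHyp V TT ρ f →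
          ∀ E : Finset (List A) → Prop, (∀ t ∈ TT, E t → w ∈ t ∧ f w ∉ t) →
          prOf TT ρ E = 0 := by
        intro ρ hρ0 hMρ E hE
        have h1 := prOf_mono hρ0 hE
        rw [hMρ.2.1 w hwV hwne] at h1
        exact le_antisymm h1 (prOf_nonneg hρ0 E)
      by_cases hwI : w ∈ I
      · have hwJ : w ∉ J := Finset.disjoint_left.1 hdisj hwI
        have hiff : ∀ t ∈ TT, ((I ⊆ t ∧ ∀ u ∈ J, u ∉ t) ↔
            (w ∈ t ∧ I.erase w ⊆ t ∧ ∀ u ∈ J, u ∉ t)) := by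
          intro t _
          constructor
          · rintro ⟨h1, h2⟩
            exact ⟨h1 hwI, (Finset.erase_subset _ _).trans h1, h2⟩
          · rintro ⟨h1, h2, h3⟩
            refine ⟨fun u hu => ?_, h3⟩
            by_cases h : u = w
            · rwa [h]
            · exact h2 (Finset.mem_erase.2 ⟨h, hu⟩)
        rw [prOf_congr hiff, prOf_congr hiff]
        have hunion : I.erase w ∪ J = S.erase w := by
          rw [← hIJ, Finset.erase_union_distrib, Finset.erase_eq_of_notMem hwJ]
        have hdisj' : Disjoint (I.erase w) J :=
          Finset.disjoint_of_subset_left (Finset.erase_subset _ _) hdisj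
        by_cases hvJ : f w ∈ J
        · rw [zero_case π hπ0 hM _ (fun t _ h => ⟨h.1, h.2.2 _ hvJ⟩),
            zero_case π' hπ'0 hM' _ (fun t _ h => ⟨h.1, h.2.2 _ hvJ⟩)]
        · have hvI : f w ∈ I := by
            have : f w ∈ I ∪ J := hIJ ▸ hvS
            rcases Finset.mem_union.1 this with h | h
            · exact h
            · exact absurd h hvJ
          have hvI' : f w ∈ I.erase w := Finset.mem_erase.2 ⟨hvne, hvI⟩
          have hwIJ : w ∉ I.erase w ∪ J :=
            fun h => (Finset.mem_union.1 h).elim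
              (fun h => Finset.notMem_erase _ _ h) (fun h => hwJ h)
          have hIH := IH (S.erase w) hS'ss hS'V hS'cl (I.erase w) J hunion hdisj'
          rw [main π hπ0 hM _ _ ((Finset.erase_subset _ _).trans hIsub) hJsub hvI' hwIJ,
            main π' hπ'0 hM' _ _ ((Finset.erase_subset _ _).trans hIsub) hJsub hvI' hwIJ,
            hIH, hμ w hwV, hμ (f w) hvV]
      · have hwJ : w ∈ J := by
          have : w ∈ I ∪ J := hIJ ▸ hwS
          rcases Finset.mem_union.1 this with h | h
          · exact absurd h hwI
          · exact h
        have hiff : ∀ t ∈ TT, ((I ⊆ t ∧ ∀ u ∈ J, u ∉ t) ↔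
            ((I ⊆ t ∧ ∀ u ∈ J.erase w, u ∉ t) ∧ w ∉ t)) := by
          intro t _
          constructor
          · rintro ⟨h1, h2⟩
            exact ⟨⟨h1, fun u hu => h2 u (Finset.erase_subset _ _ hu)⟩, h2 w hwJ⟩
          · rintro ⟨⟨h1, h2⟩, h3⟩
            refine ⟨h1, fun u hu => ?_⟩
            by_cases h : u = w
            · rwa [h]
            · exact h2 u (Finset.mem_erase.2 ⟨h, hu⟩)
        rw [prOf_congr hiff, prOf_congr hiff]
        have hunion : I ∪ J.erase w = S.erase w := by
          rw [← hIJ, Finset.erase_union_distrib, Finset.erase_eq_of_notMem hwI]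
        have hdisj' : Disjoint I (J.erase w) :=
          Finset.disjoint_of_subset_right (Finset.erase_subset _ _) hdisj
        have hIH := IH (S.erase w) hS'ss hS'V hS'cl I (J.erase w) hunion hdisj'
        have hsplitπ := prOf_split (TT := TT) (π := π)
          (fun t => I ⊆ t ∧ ∀ u ∈ J.erase w, u ∉ t) w
        have hsplitπ' := prOf_split (TT := TT) (π := π')
          (fun t => I ⊆ t ∧ ∀ u ∈ J.erase w, u ∉ t) w
        -- rewrite (F ∧ w ∈ t) into the shape (w ∈ t ∧ F)
        have hswap : ∀ ρ : Finset (List A) → ℝ,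
            prOf TT ρ (fun t => (I ⊆ t ∧ ∀ u ∈ J.erase w, u ∉ t) ∧ w ∈ t) =
              prOf TT ρ (fun t => w ∈ t ∧ I ⊆ t ∧ ∀ u ∈ J.erase w, u ∉ t) := by
          intro ρ
          exact prOf_congr fun t _ => by tauto
        have heq2 : prOf TT π (fun t => w ∈ t ∧ I ⊆ t ∧ ∀ u ∈ J.erase w, u ∉ t) =
            prOf TT π' (fun t => w ∈ t ∧ I ⊆ t ∧ ∀ u ∈ J.erase w, u ∉ t) := by
          by_cases hvI : f w ∈ I
          · have hwIJ : w ∉ I ∪ J.erase w :=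
              fun h => (Finset.mem_union.1 h).elim
                (fun h => hwI h) (fun h => Finset.notMem_erase _ _ h)
            rw [main π hπ0 hM _ _ hIsub ((Finset.erase_subset _ _).trans hJsub) hvI hwIJ,
              main π' hπ'0 hM' _ _ hIsub ((Finset.erase_subset _ _).trans hJsub) hvI hwIJ,
              hIH, hμ w hwV, hμ (f w) hvV]
          · have hvJ' : f w ∈ J.erase w := by
              have : f w ∈ I ∪ J := hIJ ▸ hvS
              rcases Finset.mem_union.1 this with h | h
              · exact absurd h hvI
              · exact Finset.mem_erase.2 ⟨hvne, h⟩
            rw [zero_case π hπ0 hM _ (fun t _ h => ⟨h.1, h.2.2 _ hvJ'⟩),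
              zero_case π' hπ'0 hM' _ (fun t _ h => ⟨h.1, h.2.2 _ hvJ'⟩)]
        rw [hswap π] at hsplitπ
        rw [hswap π'] at hsplitπ'
        linarith [hIH, heq2, hsplitπ, hsplitπ']
  intro t₀ ht₀
  have ht₀sub : t₀ ⊆ V := ((hTT t₀).1 ht₀).1
  have hid : ∀ ρ : Finset (List A) → ℝ,
      prOf TT ρ (fun t => t₀ ⊆ t ∧ ∀ u ∈ V \ t₀, u ∉ t) = ρ t₀ := by
    intro ρ
    unfold prOf
    rw [Finset.sum_eq_single t₀]
    · rw [if_pos ⟨Finset.Subset.refl _, fun u hu => (Finset.mem_sdiff.1 hu).2⟩]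
    · intro t ht hne
      rw [if_neg]
      rintro ⟨h1, h2⟩
      apply hne
      have htV : t ⊆ V := ((hTT t).1 ht).1
      refine Finset.Subset.antisymm (fun u hu => ?_) h1
      by_contra hu0
      exact h2 u (Finset.mem_sdiff.2 ⟨htV hu, hu0⟩) hu
    · intro h; exact absurd ht₀ h
  have hfinal := key V (Finset.Subset.refl V) hVclosed t₀ (V \ t₀)
    (Finset.union_sdiff_of_subset ht₀sub) Finset.disjoint_sdiff
  rw [← hid π, ← hid π', hfinal]
end

section
/- If β > Σ_{v∈V} φ(v), then the set of trees minimizing ℒ(t) over t ∈ 𝒯 equals the set of configurations minimizing ℒ(y) + β𝒫(y) over y ∈ 𝒴. -/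
open Finset

/-- Lemma A.4: if `β > ∑_{v ∈ V} φ v`, then the set of trees minimizing `ℒ`
over `𝒯` equals the set of configurations minimizing `ℒ(y) + β𝒫(y)` over `𝒴 = {0,1}^V`.
Configurations are encoded as `y : List A → Bool` supported on `V`; trees are the
suffix-closed configurations. -/
theorem stmt_6
    {A : Type*} [Fintype A] [DecidableEq A] [Nonempty A]
    (L : ℕ) (hL : 0 < L)
    (V : Finset (List A)) (hV : ∀ l : List A, l ∈ V ↔ l.length ≤ L)
    (φ : List A → ℝ) (hφ : ∀ v ∈ V, 0 < φ v)
    -- the two samples of trees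
    (n m : ℕ) (hn : 0 < n) (hm : 0 < m)
    (ts : Fin n → Finset (List A)) (ts' : Fin m → Finset (List A))
    (hts : ∀ i, ts i ⊆ V ∧ ∀ (a : A) (w : List A), a :: w ∈ ts i → w ∈ ts i)
    (hts' : ∀ i, ts' i ⊆ V ∧ ∀ (a : A) (w : List A), a :: w ∈ ts' i → w ∈ ts' i)
    -- empirical node means and Δ
    (tbar tbar' : List A → ℝ)
    (htbar : ∀ v, tbar v = (∑ i, if v ∈ ts i then (1 : ℝ) else 0) / n)
    (htbar' : ∀ v, tbar' v = (∑ i, if v ∈ ts' i then (1 : ℝ) else 0) / m)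
    (Δ : List A → ℝ) (hΔ : ∀ v, Δ v = tbar' v - tbar v)
    -- ℒ and the penalty 𝒫 on configurations
    (Lf Pf : (List A → Bool) → ℝ)
    (hLf : ∀ y, Lf y = ∑ v ∈ V, φ v * Δ v * (if y v then (1 : ℝ) else 0))
    (hPf : ∀ y, Pf y = ∑ v ∈ V, ∑ a : A,
        if (a :: v) ∈ V then
          (if y (a :: v) then (1 : ℝ) else 0) * (1 - if y v then (1 : ℝ) else 0)
        else 0)
    (β : ℝ) (hβ : β > ∑ v ∈ V, φ v) :
    ∀ y : List A → Bool, (∀ v, y v = true → v ∈ V) →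
      (((∀ (a : A) (w : List A), y (a :: w) = true → y w = true) ∧
          ∀ t : List A → Bool,
            (∀ v, t v = true → v ∈ V) →
            (∀ (a : A) (w : List A), t (a :: w) = true → t w = true) →
            Lf y ≤ Lf t)
        ↔
       (∀ y' : List A → Bool, (∀ v, y' v = true → v ∈ V) →
          Lf y + β * Pf y ≤ Lf y' + β * Pf y')) := by

  -- basic facts
  have hsum_nonneg : (0:ℝ) ≤ ∑ v ∈ V, φ v :=
    Finset.sum_nonneg fun v hv => (hφ v hv).le
  have hβpos : 0 < β := lt_of_le_of_lt hsum_nonneg hβ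
  -- Δ v ≥ -1
  have hΔlb : ∀ v, -1 ≤ Δ v := by
    intro v
    have h1 : tbar v ≤ 1 := by
      rw [htbar v]
      rw [div_le_one (by exact_mod_cast hn)]
      calc (∑ i : Fin n, if v ∈ ts i then (1:ℝ) else 0) ≤ ∑ i : Fin n, 1 := by
            apply Finset.sum_le_sum; intro i _; split <;> norm_num
        _ = n := by simp
    have h2 : 0 ≤ tbar' v := by
      rw [htbar' v]
      apply div_nonneg _ (by positivity)
      apply Finset.sum_nonneg; intro i _; split <;> norm_num
    rw [hΔ v]; linarith
  -- Lf lower bound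
  have hLlb : ∀ z : List A → Bool, -(∑ v ∈ V, φ v) ≤ Lf z := by
    intro z
    rw [hLf, ← Finset.sum_neg_distrib]
    apply Finset.sum_le_sum
    intro v hv
    have hp := hφ v hv
    have hd := hΔlb v
    by_cases h : z v = true
    · simp only [h, if_pos]; nlinarith
    · simp only [h]; simp; nlinarith
  -- Pf nonneg
  have hPnn : ∀ z : List A → Bool, 0 ≤ Pf z := by
    intro z
    rw [hPf]
    apply Finset.sum_nonneg; intro v _
    apply Finset.sum_nonneg; intro a _
    split_ifs <;> norm_num
  -- Pf of tree = 0
  have hPtree : ∀ z : List A → Bool,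
      (∀ (a : A) (w : List A), z (a :: w) = true → z w = true) → Pf z = 0 := by
    intro z hz
    rw [hPf]
    apply Finset.sum_eq_zero; intro v _
    apply Finset.sum_eq_zero; intro a _
    by_cases h : (a :: v) ∈ V
    · simp only [h, if_pos]
      by_cases h2 : z (a :: v) = true
      · have := hz a v h2; simp [h2, this]
      · simp [h2]
    · simp [h]
  -- Pf ≥ 1 for non-tree supported config
  have hPviol : ∀ z : List A → Bool, (∀ v, z v = true → v ∈ V) →
      (¬ ∀ (a : A) (w : List A), z (a :: w) = true → z w = true) → 1 ≤ Pf z := by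
    intro z hzV hz
    push_neg at hz
    obtain ⟨a, w, h1, h2⟩ := hz
    have haw : (a :: w) ∈ V := hzV _ h1
    have hw : w ∈ V := by
      rw [hV] at haw ⊢
      simp only [List.length_cons] at haw
      omega
    rw [hPf]
    have hterm : (1:ℝ) ≤ ∑ a' : A,
        if (a' :: w) ∈ V then
          (if z (a' :: w) then (1 : ℝ) else 0) * (1 - if z w then (1 : ℝ) else 0)
        else 0 := by
      have := Finset.single_le_sum (f := fun a' : A =>
        if (a' :: w) ∈ V then
          (if z (a' :: w) then (1 : ℝ) else 0) * (1 - if z w then (1 : ℝ) else 0)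
        else 0) (fun a' _ => by
          by_cases hm : (a' :: w) ∈ V <;> by_cases hz1 : z (a' :: w) = true <;>
            by_cases hz2 : z w = true <;> simp [hm, hz1, hz2]) (Finset.mem_univ a)
      simpa [haw, h1, h2] using this
    have hstep : (∑ a' : A,
        if (a' :: w) ∈ V then
          (if z (a' :: w) then (1 : ℝ) else 0) * (1 - if z w then (1 : ℝ) else 0)
        else 0) ≤ ∑ v ∈ V, ∑ a' : A,
          if (a' :: v) ∈ V then
            (if z (a' :: v) then (1 : ℝ) else 0) * (1 - if z v then (1 : ℝ) else 0)
          else 0 :=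
      Finset.single_le_sum (f := fun v => ∑ a' : A,
        if (a' :: v) ∈ V then
          (if z (a' :: v) then (1 : ℝ) else 0) * (1 - if z v then (1 : ℝ) else 0)
        else 0)
        (fun v _ => Finset.sum_nonneg fun a' _ => by
          by_cases hm : (a' :: v) ∈ V <;> by_cases hz1 : z (a' :: v) = true <;>
            by_cases hz2 : z v = true <;> simp [hm, hz1, hz2]) hw
    linarith
  have hLfalse : Lf (fun _ => false) = 0 := by
    rw [hLf]; simp
  have hPfalse : Pf (fun _ => false) = 0 := hPtree _ (by simp)
  intro y hy
  constructor
  · rintro ⟨hyt, hymin⟩ y' hy'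
    have hPy : Pf y = 0 := hPtree y hyt
    by_cases hy't : ∀ (a : A) (w : List A), y' (a :: w) = true → y' w = true
    · have h1 := hymin y' hy' hy't
      have h2 := hPnn y'
      nlinarith
    · have h1 : 1 ≤ Pf y' := hPviol y' hy' hy't
      have h0 : Lf y ≤ 0 := by
        have := hymin (fun _ => false) (by simp) (by simp)
        linarith [hLfalse]
      have hlow := hLlb y'
      nlinarith
  · intro hmin
    have hyt : ∀ (a : A) (w : List A), y (a :: w) = true → y w = true := by
      by_contra hcon
      have h1 : 1 ≤ Pf y := hPviol y hy hcon
      have h2 := hmin (fun _ => false) (by simp)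
      rw [hLfalse, hPfalse] at h2
      have hlow := hLlb y
      nlinarith
    refine ⟨hyt, fun t htV htT => ?_⟩
    have h2 := hmin t htV
    have hPy : Pf y = 0 := hPtree y hyt
    have hPt : Pf t = 0 := hPtree t htT
    rw [hPy, hPt] at h2
    linarith
end

section
/- Let T be a random tree with law π satisfying the Markov hypotheses with tree-shift f. Let t ∈ 𝒯 be a nonempty tree with t ≠ V, and let h ∈ V∖t be a node such that t ∪ {h} ∈ 𝒯 and v := f(h) ∈ t. Then π(t ∪ {h}) = π(t) · μ_π(h)/(μ_π(v) − μ_π(h)). -/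
open Finset
open scoped Classical

private lemma root_mem_of_tree {A : Type*} [DecidableEq A]
    (t : Finset (List A)) (htree : ∀ (a : A) (w : List A), a :: w ∈ t → w ∈ t)
    (w : List A) (hw : w ∈ t) : ([] : List A) ∈ t := by
  induction w with
  | nil => exact hw
  | cons a u ih => exact ih (htree a u hw)

/-- formula (A.14): if the random tree `T` with law `π` satisfies the
Markov hypotheses with tree-shift `f`, `t` is a nonempty tree with `t ≠ V`, and `h ∉ t`
is a node such that `t ∪ {h}` is a tree and `v := f h ∈ t`, then
`π(t ∪ {h}) = π(t) · μ_π(h) / (μ_π(v) - μ_π(h))`. -/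
theorem stmt_16
    {A : Type*} [Fintype A] [DecidableEq A] [Nonempty A]
    (L : ℕ) (hL : 0 < L)
    (V : Finset (List A)) (hV : ∀ l : List A, l ∈ V ↔ l.length ≤ L)
    (TT : Finset (Finset (List A)))
    (hTT : ∀ t, t ∈ TT ↔ t ⊆ V ∧ ∀ (a : A) (w : List A), a :: w ∈ t → w ∈ t)
    (π : Finset (List A) → ℝ)
    (hπ0 : ∀ t, 0 ≤ π t) (hπ1 : ∑ t ∈ TT, π t = 1)
    (f : List A → List A) (hf : IsTreeShift V f)
    (hM : MarkovHyp V TT π f)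
    (t : Finset (List A)) (ht : t ∈ TT) (htne : t.Nonempty) (htV : t ≠ V)
    (h : List A) (hhV : h ∈ V) (hht : h ∉ t)
    (hins : insert h t ∈ TT) (hfh : f h ∈ t) :
    π (insert h t) = π t * (muOf TT π h / (muOf TT π (f h) - muOf TT π h)) := by
  obtain ⟨hMa, hMb, hMc⟩ := hM
  obtain ⟨htV', htree⟩ := (hTT t).mp ht
  obtain ⟨w, hw⟩ := htne
  have hroot : ([] : List A) ∈ t := root_mem_of_tree t htree w hw
  have hne : h ≠ [] := fun e => hht (e ▸ hroot)
  set J : Finset (List A) := V \ insert h t with hJ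
  have htins : t ≠ insert h t := by
    intro e
    exact hht (e ▸ Finset.mem_insert_self h t)
  -- the event `t ⊆ s ∧ s avoids J` is `s = t ∨ s = insert h t`
  have hev : ∀ s ∈ TT, ((t ⊆ s ∧ ∀ u ∈ J, u ∉ s) ↔ (s = t ∨ s = insert h t)) := by
    intro s hs
    have hsV : s ⊆ V := ((hTT s).mp hs).1
    constructor
    · rintro ⟨h1, h2⟩
      have hsub : s ⊆ insert h t := by
        intro u hu
        by_contra hu'
        exact h2 u (Finset.mem_sdiff.mpr ⟨hsV hu, hu'⟩) hu
      by_cases hh : h ∈ s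
      · right
        exact Finset.Subset.antisymm hsub (Finset.insert_subset hh h1)
      · left
        refine Finset.Subset.antisymm (fun u hu => ?_) h1
        rcases Finset.mem_insert.mp (hsub hu) with rfl | hu'
        · exact absurd hu hh
        · exact hu'
    · rintro (rfl | rfl)
      · exact ⟨Finset.Subset.refl _, fun u hu hu' =>
          (Finset.mem_sdiff.mp hu).2 (Finset.mem_insert_of_mem hu')⟩
      · exact ⟨Finset.subset_insert _ _, fun u hu hu' =>
          (Finset.mem_sdiff.mp hu).2 hu'⟩
  have hD : prOf TT π (fun s => t ⊆ s ∧ ∀ u ∈ J, u ∉ s) = π t + π (insert h t) := by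
    simp only [prOf]
    refine (Finset.sum_eq_add_of_mem t (insert h t) ht hins htins ?_).trans ?_
    · intro k hk hk2
      refine if_neg ?_
      intro hc
      rcases (hev k hk).mp hc with rfl | rfl
      · exact hk2.1 rfl
      · exact hk2.2 rfl
    · rw [if_pos ((hev t ht).mpr (Or.inl rfl)), if_pos ((hev _ hins).mpr (Or.inr rfl))]
  have hN : prOf TT π (fun s => h ∈ s ∧ t ⊆ s ∧ ∀ u ∈ J, u ∉ s) = π (insert h t) := by
    simp only [prOf]
    refine (Finset.sum_eq_single_of_mem (insert h t) hins ?_).trans ?_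
    · intro k hk hk2
      refine if_neg ?_
      rintro ⟨hh, hrest⟩
      rcases (hev k hk).mp hrest with rfl | rfl
      · exact hht hh
      · exact hk2 rfl
    · exact if_pos ⟨Finset.mem_insert_self h t, (hev _ hins).mpr (Or.inr rfl)⟩
  have hsplit : muOf TT π h = prOf TT π (fun s => h ∈ s ∧ f h ∈ s)
      + prOf TT π (fun s => h ∈ s ∧ f h ∉ s) := by
    simp only [muOf, prOf]
    rw [← Finset.sum_add_distrib]
    refine Finset.sum_congr rfl fun s _ => ?_
    by_cases h1 : h ∈ s
    · by_cases h2 : f h ∈ s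
      · rw [if_pos h1, if_pos ⟨h1, h2⟩, if_neg (fun c => c.2 h2), add_zero]
      · rw [if_pos h1, if_neg (fun c => h2 c.2), if_pos ⟨h1, h2⟩, zero_add]
    · rw [if_neg h1, if_neg (fun c => h1 c.1), if_neg (fun c => h1 c.1), add_zero]
  have hμh : prOf TT π (fun s => h ∈ s ∧ f h ∈ s) = muOf TT π h := by
    rw [hsplit, hMb h hhV hne, add_zero]
  obtain ⟨hμh0, hμlt, hμv1⟩ := hMa h hhV hne
  have hμv0 : 0 < muOf TT π (f h) := lt_trans hμh0 hμlt
  by_cases hd : π t + π (insert h t) = 0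
  · have h1 : π t = 0 := le_antisymm (by linarith [hπ0 (insert h t)]) (hπ0 t)
    have h2 : π (insert h t) = 0 := by linarith [hπ0 t]
    rw [h1, h2, zero_mul]
  · have hd' : 0 < π t + π (insert h t) :=
      lt_of_le_of_ne (add_nonneg (hπ0 t) (hπ0 _)) (Ne.symm hd)
    have hJV : J ⊆ V := Finset.sdiff_subset
    have hhIJ : h ∉ t ∪ J := by
      rw [Finset.mem_union]
      rintro (h1 | h1)
      · exact hht h1
      · exact (Finset.mem_sdiff.mp h1).2 (Finset.mem_insert_self h t)
    have hpos : 0 < prOf TT π (fun s => t ⊆ s ∧ ∀ u ∈ J, u ∉ s) := by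
      rw [hD]; exact hd'
    have hc := hMc h hhV hne t J htV' hJV hfh hhIJ hpos
    rw [hN, hD, hμh] at hc
    have hμvdef : prOf TT π (fun s => f h ∈ s) = muOf TT π (f h) := rfl
    rw [hμvdef] at hc
    have hcc : π (insert h t) * muOf TT π (f h)
        = muOf TT π h * (π t + π (insert h t)) := by
      field_simp at hc
      linarith [hc]
    have hne2 : muOf TT π (f h) - muOf TT π h ≠ 0 := by linarith
    field_simp
    linarith [hcc]
end

section
/- Let y ∈ 𝒴 be a configuration that is not a tree and suppose β > Σ_{v∈V} φ(v). Then ℒ(y) + β𝒫(y) > ℒ(t) + β𝒫(t) for every tree t ∈ 𝒯; in particular ℒ(y) + β𝒫(y) ≥ ℒ_min + β > ℒ_max, where ℒ_min and ℒ_max are the minimum and maximum of ℒ over 𝒴. -/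
open Finset

/-- inequality (A.24): if `y ∈ 𝒴` is a configuration that is not a tree and
`β > ∑_{v∈V} φ(v)`, then `ℒ(y) + β𝒫(y) > ℒ(t) + β𝒫(t)` for every tree `t ∈ 𝒯`; in
particular `ℒ(y) + β𝒫(y) ≥ ℒ_min + β > ℒ_max`, where `ℒ_min` and `ℒ_max` are the minimum
and maximum of `ℒ` over `𝒴`. -/
theorem stmt_17
    {A : Type*} [Fintype A] [DecidableEq A] [Nonempty A]
    (L : ℕ) (hL : 0 < L)
    (V : Finset (List A)) (hV : ∀ l : List A, l ∈ V ↔ l.length ≤ L)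
    (φ : List A → ℝ) (hφ : ∀ v ∈ V, 0 < φ v)
    -- the two samples of trees
    (n m : ℕ) (hn : 0 < n) (hm : 0 < m)
    (ts : Fin n → Finset (List A)) (ts' : Fin m → Finset (List A))
    (hts : ∀ i, ts i ⊆ V ∧ ∀ (a : A) (w : List A), a :: w ∈ ts i → w ∈ ts i)
    (hts' : ∀ i, ts' i ⊆ V ∧ ∀ (a : A) (w : List A), a :: w ∈ ts' i → w ∈ ts' i)
    -- empirical node means and Δ
    (tbar tbar' : List A → ℝ)
    (htbar : ∀ v, tbar v = (∑ i, if v ∈ ts i then (1 : ℝ) else 0) / n)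
    (htbar' : ∀ v, tbar' v = (∑ i, if v ∈ ts' i then (1 : ℝ) else 0) / m)
    (Δ : List A → ℝ) (hΔ : ∀ v, Δ v = tbar' v - tbar v)
    -- ℒ and the penalty 𝒫 on configurations
    (Lf Pf : (List A → Bool) → ℝ)
    (hLf : ∀ y, Lf y = ∑ v ∈ V, φ v * Δ v * (if y v then (1 : ℝ) else 0))
    (hPf : ∀ y, Pf y = ∑ v ∈ V, ∑ a : A,
        if (a :: v) ∈ V then
          (if y (a :: v) then (1 : ℝ) else 0) * (1 - if y v then (1 : ℝ) else 0)
        else 0)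
    -- ℒ_min and ℒ_max: the minimum and maximum of ℒ over 𝒴
    (Lmin Lmax : ℝ)
    (hLmin : IsLeast
      {x : ℝ | ∃ y : List A → Bool, (∀ v, y v = true → v ∈ V) ∧ Lf y = x} Lmin)
    (hLmax : IsGreatest
      {x : ℝ | ∃ y : List A → Bool, (∀ v, y v = true → v ∈ V) ∧ Lf y = x} Lmax)
    (β : ℝ) (hβ : β > ∑ v ∈ V, φ v)
    -- a configuration y that is not a tree
    (y : List A → Bool) (hyV : ∀ v, y v = true → v ∈ V)
    (hynt : ¬ ∀ (a : A) (w : List A), y (a :: w) = true → y w = true) :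
    (∀ t : List A → Bool,
        (∀ v, t v = true → v ∈ V) →
        (∀ (a : A) (w : List A), t (a :: w) = true → t w = true) →
        Lf t + β * Pf t < Lf y + β * Pf y) ∧
    Lmin + β ≤ Lf y + β * Pf y ∧
    Lmax < Lmin + β := by
  -- bounds on tbar, tbar'
  have htb01 : ∀ v, 0 ≤ tbar v ∧ tbar v ≤ 1 := by
    intro v
    rw [htbar v]
    have hnpos : (0:ℝ) < n := by exact_mod_cast hn
    constructor
    · apply div_nonneg _ hnpos.le
      apply Finset.sum_nonneg; intro i _; split <;> norm_num
    · rw [div_le_one hnpos]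
      calc (∑ i, if v ∈ ts i then (1:ℝ) else 0) ≤ ∑ _i : Fin n, (1:ℝ) := by
            apply Finset.sum_le_sum; intro i _; split <;> norm_num
        _ = n := by simp
  have htb01' : ∀ v, 0 ≤ tbar' v ∧ tbar' v ≤ 1 := by
    intro v
    rw [htbar' v]
    have hmpos : (0:ℝ) < m := by exact_mod_cast hm
    constructor
    · apply div_nonneg _ hmpos.le
      apply Finset.sum_nonneg; intro i _; split <;> norm_num
    · rw [div_le_one hmpos]
      calc (∑ i, if v ∈ ts' i then (1:ℝ) else 0) ≤ ∑ _i : Fin m, (1:ℝ) := by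
            apply Finset.sum_le_sum; intro i _; split <;> norm_num
        _ = m := by simp
  have hΔb : ∀ v, -1 ≤ Δ v ∧ Δ v ≤ 1 := by
    intro v
    have h1 := htb01 v; have h2 := htb01' v
    rw [hΔ v]; constructor <;> linarith [h1.1, h1.2, h2.1, h2.2]
  -- difference of Lf bounded by sum of φ
  have hLdiff : ∀ y1 y2 : List A → Bool, Lf y1 - Lf y2 ≤ ∑ v ∈ V, φ v := by
    intro y1 y2
    rw [hLf, hLf, ← Finset.sum_sub_distrib]
    apply Finset.sum_le_sum
    intro v hv
    have hφv := hφ v hv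
    have hd := hΔb v
    by_cases h1 : y1 v <;> by_cases h2 : y2 v <;> simp [h1, h2] <;> nlinarith [hd.1, hd.2]
  have hsumpos : (0:ℝ) < ∑ v ∈ V, φ v := by
    apply Finset.sum_pos hφ
    exact ⟨[], (hV []).2 (by simp)⟩
  have hβpos : 0 < β := lt_trans hsumpos hβ
  -- Pf of a tree is zero
  have hPt0 : ∀ t : List A → Bool,
      (∀ (a : A) (w : List A), t (a :: w) = true → t w = true) → Pf t = 0 := by
    intro t htT
    rw [hPf]
    apply Finset.sum_eq_zero
    intro v _
    apply Finset.sum_eq_zero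
    intro a _
    split
    · by_cases h : t (a :: v)
      · have := htT a v h; simp [h, this]
      · simp [h]
    · rfl
  -- Pf y ≥ 1
  have hPy1 : 1 ≤ Pf y := by
    push_neg at hynt
    obtain ⟨a, w, hyaw, hyw⟩ := hynt
    have haw : (a :: w) ∈ V := hyV _ hyaw
    have hw : w ∈ V := by
      rw [hV] at haw ⊢
      simp at haw; omega
    rw [hPf]
    have hterm : ∀ v ∈ V, ∀ b : A, (0:ℝ) ≤
        (if (b :: v) ∈ V then
          (if y (b :: v) then (1:ℝ) else 0) * (1 - if y v then (1:ℝ) else 0)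
        else 0) := by
      intro v _ b
      split
      · apply mul_nonneg
        · split <;> norm_num
        · split <;> norm_num
      · exact le_refl 0
    calc (1:ℝ) = ∑ b ∈ ({a} : Finset A),
          (if (b :: w) ∈ V then
            (if y (b :: w) then (1:ℝ) else 0) * (1 - if y w then (1:ℝ) else 0)
          else 0) := by simp [haw, hyaw, hyw]
      _ ≤ ∑ b : A, (if (b :: w) ∈ V then
            (if y (b :: w) then (1:ℝ) else 0) * (1 - if y w then (1:ℝ) else 0)
          else 0) := by
            apply Finset.sum_le_sum_of_subset_of_nonneg (Finset.subset_univ _)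
            intro b _ _; exact hterm w hw b
      _ ≤ ∑ v ∈ V, ∑ b : A, (if (b :: v) ∈ V then
            (if y (b :: v) then (1:ℝ) else 0) * (1 - if y v then (1:ℝ) else 0)
          else 0) := by
            apply Finset.single_le_sum (f := fun v => ∑ b : A, _) _ hw
            intro v hv
            apply Finset.sum_nonneg
            intro b _
            exact hterm v hv b
  have hβP : β ≤ β * Pf y := by nlinarith
  refine ⟨?_, ?_, ?_⟩
  · intro t htV htT
    rw [hPt0 t htT]
    have := hLdiff t y
    linarith
  · have hmin : Lmin ≤ Lf y := hLmin.2 ⟨y, hyV, rfl⟩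
    linarith
  · obtain ⟨y1, hy1V, hy1⟩ := hLmax.1
    obtain ⟨y2, hy2V, hy2⟩ := hLmin.1
    have := hLdiff y1 y2
    linarith
end
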